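/- arXiv:2503.01889 — 7 statements merged into one kernel-verified Lean document; each statement's English description precedes it below -/
import Mathlib

section
/- A complete strategy profile (σ*;π*) of a finite game with uncertainty is an extended equilibrium if and only if it is a fixed point of the auxiliary map Υ, where Υ(σ;π) = (σ';π') with σ'_i(a_i) = (σ_i(a_i) + φ_{i,a_i}(σ;π)) / (1 + Σ_{b_i∈𝒜_i} φ_{i,b_i}(σ;π)), π'_i(θ) = (π_i(θ) + ψ_{i,θ}(σ;π)) / (1 + Σ_{χ∈Θ} ψ_{i,χ}(σ;π)), φ_{i,a_i}(σ;π) = max(0, EU_i(a_i|σ;π) − EU_i(σ;π)), and ψ_{i,θ}(σ;π) = max(0, ER_i(θ|σ;π) − ER_i(σ;π)). -/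
open Finset

noncomputable section

/-- A probability distribution on a finite type. -/
def IsDist {α : Type*} [Fintype α] (p : α → ℝ) : Prop :=
  (∀ x, 0 ≤ p x) ∧ ∑ x, p x = 1

variable {N : ℕ} {A : Fin N → Type*} [∀ j, Fintype (A j)] [∀ j, Nonempty (A j)]
  {Θ : Type*} [Fintype Θ] [Nonempty Θ]

/-- `Π(a|σ) = ∏ⱼ σⱼ(aⱼ)`. -/
def piProb (σ : ∀ j : Fin N, A j → ℝ) (a : ∀ j : Fin N, A j) : ℝ := ∏ j, σ j (a j)

/-- Effective utility matrix `EUᵢ(aᵢ;θ|σ)`. -/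
def EUmat (U : ∀ i : Fin N, (∀ j : Fin N, A j) → Θ → ℝ) (σ : ∀ j : Fin N, A j → ℝ)
    (i : Fin N) (ai : A i) (θ : Θ) : ℝ :=
  ∑ b : ∀ j : Fin N, A j, U i (Function.update b i ai) θ * piProb σ b

/-- Effective regret matrix `ERᵢ(aᵢ;θ|σ)`. -/
def ERmat (U : ∀ i : Fin N, (∀ j : Fin N, A j) → Θ → ℝ) (σ : ∀ j : Fin N, A j → ℝ)
    (i : Fin N) (ai : A i) (θ : Θ) : ℝ :=
  (Finset.univ.sup' Finset.univ_nonempty fun ci : A i => EUmat U σ i ci θ) - EUmat U σ i ai θ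

/-- Expected utility of action `aᵢ`: `EUᵢ(aᵢ|σ;π)`. -/
def EUact (U : ∀ i : Fin N, (∀ j : Fin N, A j) → Θ → ℝ) (σ : ∀ j : Fin N, A j → ℝ) (π : Fin N → Θ → ℝ)
    (i : Fin N) (ai : A i) : ℝ :=
  ∑ θ, EUmat U σ i ai θ * π i θ

/-- Expected utility `EUᵢ(σ;π)`. -/
def EUtot (U : ∀ i : Fin N, (∀ j : Fin N, A j) → Θ → ℝ) (σ : ∀ j : Fin N, A j → ℝ) (π : Fin N → Θ → ℝ)
    (i : Fin N) : ℝ :=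
  ∑ ai, EUact U σ π i ai * σ i ai

/-- Expected regret at parameter `θ`: `ERᵢ(θ|σ;π)`. -/
def ERparam (U : ∀ i : Fin N, (∀ j : Fin N, A j) → Θ → ℝ) (σ : ∀ j : Fin N, A j → ℝ)
    (i : Fin N) (θ : Θ) : ℝ :=
  ∑ ai, ERmat U σ i ai θ * σ i ai

/-- Expected regret `ERᵢ(σ;π)`. -/
def ERtot (U : ∀ i : Fin N, (∀ j : Fin N, A j) → Θ → ℝ) (σ : ∀ j : Fin N, A j → ℝ) (π : Fin N → Θ → ℝ)
    (i : Fin N) : ℝ :=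
  ∑ θ, ERparam U σ i θ * π i θ

/-- Extended equilibrium conditions. -/
def ExtendedEquilibrium (U : ∀ i : Fin N, (∀ j : Fin N, A j) → Θ → ℝ)
    (σ : ∀ j : Fin N, A j → ℝ) (π : Fin N → Θ → ℝ) : Prop :=
  (∀ i, ∀ ai : A i, EUtot U σ π i ≥ EUact U σ π i ai) ∧
  (∀ i, ∀ θ : Θ, ERtot U σ π i ≥ ERparam U σ i θ)

/-- φ_{i,aᵢ}(σ;π). -/
def phi (U : ∀ i : Fin N, (∀ j : Fin N, A j) → Θ → ℝ) (σ : ∀ j : Fin N, A j → ℝ) (π : Fin N → Θ → ℝ)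
    (i : Fin N) (ai : A i) : ℝ :=
  max 0 (EUact U σ π i ai - EUtot U σ π i)

/-- ψ_{i,θ}(σ;π). -/
def psi (U : ∀ i : Fin N, (∀ j : Fin N, A j) → Θ → ℝ) (σ : ∀ j : Fin N, A j → ℝ) (π : Fin N → Θ → ℝ)
    (i : Fin N) (θ : Θ) : ℝ :=
  max 0 (ERparam U σ i θ - ERtot U σ π i)

/-- Real-strategy part of the auxiliary map `Υ`. -/
def nextStrat (U : ∀ i : Fin N, (∀ j : Fin N, A j) → Θ → ℝ) (σ : ∀ j : Fin N, A j → ℝ) (π : Fin N → Θ → ℝ)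
    (i : Fin N) (ai : A i) : ℝ :=
  (σ i ai + phi U σ π i ai) / (1 + ∑ bi, phi U σ π i bi)

/-- Prior part of the auxiliary map `Υ`. -/
def nextPrior (U : ∀ i : Fin N, (∀ j : Fin N, A j) → Θ → ℝ) (σ : ∀ j : Fin N, A j → ℝ) (π : Fin N → Θ → ℝ)
    (i : Fin N) (θ : Θ) : ℝ :=
  (π i θ + psi U σ π i θ) / (1 + ∑ χ, psi U σ π i χ)

/-- The auxiliary map `Υ`. -/
def Upsilon (U : ∀ i : Fin N, (∀ j : Fin N, A j) → Θ → ℝ)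
    (ρ : (∀ i, A i → ℝ) × (Fin N → Θ → ℝ)) : (∀ i, A i → ℝ) × (Fin N → Θ → ℝ) :=
  (fun i => nextStrat U ρ.1 ρ.2 i, fun i => nextPrior U ρ.1 ρ.2 i)

/-! Since `EUᵢ(σ;π)` is the `σᵢ`-average of `EUᵢ(·|σ;π)` and `ERᵢ(σ;π)` the `πᵢ`-average of
`ERᵢ(·|σ;π)`, both halves of `Υ` are Nash's map `p ↦ (p + g) / (1 + ∑ g)`, where `g` is the positive
part of the deviation of a payoff from its `p`-average, and the equilibrium conditions say `g = 0`.
At a fixed point `g = (∑ g) • p`, so `∑ g² = ∑ g (v - mean) = (∑ g) · ∑ p (v - mean) = 0`. -/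

section NashMap

variable {α : Type*} [Fintype α]

def nashGain (p v : α → ℝ) (x : α) : ℝ :=
  max 0 (v x - ∑ y, v y * p y)

def nashMap (p v : α → ℝ) (x : α) : ℝ :=
  (p x + nashGain p v x) / (1 + ∑ y, nashGain p v y)

lemma nashGain_nonneg (p v : α → ℝ) (x : α) : 0 ≤ nashGain p v x :=
  le_max_left _ _

lemma nashGain_eq_zero_iff {p v : α → ℝ} {x : α} :
    nashGain p v x = 0 ↔ v x ≤ ∑ y, v y * p y := by
  rw [nashGain, max_eq_left_iff, sub_nonpos]

lemma nashGain_mul_sub_mean (p v : α → ℝ) (x : α) :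
    nashGain p v x * (v x - ∑ y, v y * p y) = nashGain p v x ^ 2 := by
  rcases le_total (v x - ∑ y, v y * p y) 0 with h | h
  · simp [nashGain, max_eq_left h]
  · rw [nashGain, max_eq_right h, sq]

lemma sum_sub_mean_mul_eq_zero {p : α → ℝ} (hp : ∑ x, p x = 1) (v : α → ℝ) :
    ∑ x, (v x - ∑ y, v y * p y) * p x = 0 := by
  simp only [sub_mul, sum_sub_distrib, ← mul_sum, hp, mul_one, sub_self]

theorem nashMap_eq_self_iff {p : α → ℝ} (hp : ∑ x, p x = 1) (v : α → ℝ) :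
    nashMap p v = p ↔ ∀ x, v x ≤ ∑ y, v y * p y := by
  set S := ∑ y, nashGain p v y
  constructor
  · intro hfix x
    have hden : 1 + S ≠ 0 := (add_pos_of_pos_of_nonneg one_pos
      (sum_nonneg fun y _ => nashGain_nonneg p v y)).ne'
    have hgain : ∀ y, nashGain p v y = S * p y := fun y => by
      have := congrFun hfix y
      rw [nashMap, div_eq_iff hden] at this
      linarith
    have hsq : ∑ y, nashGain p v y ^ 2 = 0 := calc
      ∑ y, nashGain p v y ^ 2 = ∑ y, nashGain p v y * (v y - ∑ z, v z * p z) := by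
        simp only [nashGain_mul_sub_mean]
      _ = S * ∑ y, (v y - ∑ z, v z * p z) * p y := by
        rw [mul_sum]; exact sum_congr rfl fun y _ => by rw [hgain]; ring
      _ = 0 := by rw [sum_sub_mean_mul_eq_zero hp, mul_zero]
    rw [sum_eq_zero_iff_of_nonneg fun y _ => sq_nonneg _] at hsq
    exact nashGain_eq_zero_iff.1 (pow_eq_zero_iff two_ne_zero |>.1 (hsq x (mem_univ x)))
  · intro hle
    have hgain : ∀ y, nashGain p v y = 0 := fun y => nashGain_eq_zero_iff.2 (hle y)
    funext x
    simp [nashMap, hgain]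

end NashMap

/-- a complete strategy profile is an extended equilibrium iff it is a
fixed point of the auxiliary map `Υ`. -/
theorem extendedEquilibrium_iff_fixedPoint
    (U : ∀ i : Fin N, (∀ j : Fin N, A j) → Θ → ℝ)
    (σ : ∀ j : Fin N, A j → ℝ) (π : Fin N → Θ → ℝ)
    (hσ : ∀ i, IsDist (σ i)) (hπ : ∀ i, IsDist (π i)) :
    ExtendedEquilibrium U σ π ↔ Upsilon U (σ, π) = (σ, π) := by
  have hstrat (i : Fin N) : nextStrat U σ π i = nashMap (σ i) (EUact U σ π i) := rfl
  have hprior (i : Fin N) : nextPrior U σ π i = nashMap (π i) (ERparam U σ i) := rfl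
  rw [Upsilon, Prod.mk.injEq, funext_iff, funext_iff]
  simp only [hstrat, hprior, nashMap_eq_self_iff (hσ _).2, nashMap_eq_self_iff (hπ _).2]
  rfl
end
end

section
/- If a complete strategy profile (σ*;π*) of a finite game with uncertainty is a fixed point of the auxiliary map Υ, then it is an extended equilibrium: for every player i and action a_i, EU_i(a_i|σ*;π*) − EU_i(σ*;π*) ≤ 0, and for every player i and parameter value θ, ER_i(θ|σ*;π*) − ER_i(σ*;π*) ≤ 0. -/
open Finset

noncomputable section

variable {N : ℕ} {A : Fin N → Type*} [∀ j, Fintype (A j)] [∀ j, Nonempty (A j)]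
  {Θ : Type*} [Fintype Θ] [Nonempty Θ]

/-! The two halves of `Υ` are instances of Nash's map `p ↦ (p + g) / (1 + ∑ g)` with gains
`g a = max 0 (f a - 𝔼ₚ f)`, for `f = EUᵢ(·|σ;π)` and `f = ERᵢ(·|σ;π)` respectively.
At a fixed point `g = p · ∑ g`. But `f` cannot exceed its `p`-mean on the whole support of `p`,
so some `a` with `p a > 0` has `g a = 0`; this forces `∑ g = 0`, i.e. all gains vanish. -/

section NashMap

variable {α : Type*} [Fintype α]

def gain (p f : α → ℝ) (a : α) : ℝ := max 0 (f a - ∑ b, f b * p b)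

def nashUpdate (p f : α → ℝ) (a : α) : ℝ := (p a + gain p f a) / (1 + ∑ b, gain p f b)

lemma gain_nonneg (p f : α → ℝ) (a : α) : 0 ≤ gain p f a := le_max_left _ _

lemma sub_le_gain (p f : α → ℝ) (a : α) : f a - ∑ b, f b * p b ≤ gain p f a := le_max_right _ _

lemma exists_pos_le_expectation {p : α → ℝ} (hp : IsDist p) (f : α → ℝ) :
    ∃ a, 0 < p a ∧ f a ≤ ∑ b, f b * p b := by
  set t := ∑ b, f b * p b
  have centered : ∑ a, (f a - t) * p a = 0 := by
    simp only [sub_mul, Finset.sum_sub_distrib, ← Finset.mul_sum, hp.2, mul_one, t, sub_self]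
  by_contra! above
  have hpos : ∃ a, 0 < p a := by
    by_contra! hzero
    have : ∑ a, p a = 0 := Finset.sum_eq_zero fun a _ => le_antisymm (hzero a) (hp.1 a)
    linarith [hp.2]
  have hterm : ∀ a, 0 ≤ (f a - t) * p a := fun a =>
    (hp.1 a).eq_or_lt.elim (fun h => by rw [← h, mul_zero])
      fun h => (mul_pos (sub_pos.2 (above a h)) h).le
  obtain ⟨a, ha⟩ := hpos
  have : 0 < ∑ a, (f a - t) * p a :=
    Finset.sum_pos' (fun a _ => hterm a) ⟨a, Finset.mem_univ a, mul_pos (sub_pos.2 (above a ha)) ha⟩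
  linarith

lemma gain_eq_mul_sum_of_nashUpdate_eq {p f : α → ℝ} {a : α} (h : nashUpdate p f a = p a) :
    gain p f a = p a * ∑ b, gain p f b := by
  have hden : 0 < 1 + ∑ b, gain p f b := by
    linarith [Finset.sum_nonneg fun b (_ : b ∈ Finset.univ) => gain_nonneg p f b]
  rw [nashUpdate, div_eq_iff hden.ne'] at h
  linarith

theorem sub_expectation_nonpos_of_nashUpdate_eq {p f : α → ℝ} (hp : IsDist p)
    (hfix : nashUpdate p f = p) (a : α) : f a - ∑ b, f b * p b ≤ 0 := by
  have hgain b : gain p f b = p b * ∑ c, gain p f c :=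
    gain_eq_mul_sum_of_nashUpdate_eq (congrFun hfix b)
  obtain ⟨b, hpb, hfb⟩ := exists_pos_le_expectation hp f
  have hgb : gain p f b = 0 := le_antisymm (max_le le_rfl (sub_nonpos.2 hfb)) (gain_nonneg p f b)
  have hsum : ∑ c, gain p f c = 0 := by
    rw [hgain b] at hgb
    exact (mul_eq_zero.1 hgb).resolve_left hpb.ne'
  calc f a - ∑ b, f b * p b ≤ gain p f a := sub_le_gain p f a
    _ = 0 := by rw [hgain a, hsum, mul_zero]

end NashMap

/-- a fixed point of the auxiliary map `Υ` is an extended equilibrium. -/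
theorem fixedPoint_extendedEquilibrium
    (U : ∀ i : Fin N, (∀ j : Fin N, A j) → Θ → ℝ)
    (σ : ∀ j : Fin N, A j → ℝ) (π : Fin N → Θ → ℝ)
    (hσ : ∀ i, IsDist (σ i)) (hπ : ∀ i, IsDist (π i))
    (hfix : Upsilon U (σ, π) = (σ, π)) :
    (∀ i, ∀ ai : A i, EUact U σ π i ai - EUtot U σ π i ≤ 0) ∧
    (∀ i, ∀ θ : Θ, ERparam U σ i θ - ERtot U σ π i ≤ 0) := by
  have hσfix i : nashUpdate (σ i) (EUact U σ π i) = σ i := congrFun (congrArg Prod.fst hfix) i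
  have hπfix i : nashUpdate (π i) (ERparam U σ i) = π i := congrFun (congrArg Prod.snd hfix) i
  exact ⟨fun i => sub_expectation_nonpos_of_nashUpdate_eq (hσ i) (hσfix i),
    fun i => sub_expectation_nonpos_of_nashUpdate_eq (hπ i) (hπfix i)⟩
end
end

section
/- No Fictional Faith (vanishing regret part): let (σ*;π*) be an extended equilibrium of a finite game with uncertainty and suppose player i's equilibrium prior is pure, i.e. π*_i(θ) = 1 if θ = η and 0 otherwise, for some η ∈ Θ. Then player i's equilibrium expected regret is zero, ER_i(σ*;π*) = 0, and moreover every supported action of player i is a best response under every parameter value: for all a_i with σ*_i(a_i) > 0 and all θ ∈ Θ, ER_i(a_i;θ|σ*) = 0, i.e. EU_i(a_i;θ|σ*) = max_{c_i∈𝒜_i} EU_i(c_i;θ|σ*). -/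
/-!
With a pure prior at `η`, the first equilibrium condition says that `σᵢ` is a best response
at `η`, so `ERᵢ(η|σ;π) = 0`, and this is also `ERᵢ(σ;π)`. The second condition then gives
`ERᵢ(θ|σ;π) ≤ 0` for every `θ`; being a `σᵢ`-average of nonnegative regrets, it vanishes
termwise, i.e. every supported action has zero regret under `θ`.
-/

open Finset

noncomputable section

variable {N : ℕ} {A : Fin N → Type*} [∀ j, Fintype (A j)] [∀ j, Nonempty (A j)]
  {Θ : Type*} [Fintype Θ] [Nonempty Θ]

section

variable {U : ∀ i : Fin N, (∀ j : Fin N, A j) → Θ → ℝ} {σ : ∀ j : Fin N, A j → ℝ}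
  {π : Fin N → Θ → ℝ} {i : Fin N}

omit [Fintype Θ] [Nonempty Θ] in
theorem ERmat_nonneg (ai : A i) (θ : Θ) : 0 ≤ ERmat U σ i ai θ :=
  sub_nonneg.2 (le_sup' (fun ci => EUmat U σ i ci θ) (mem_univ ai))

omit [Fintype Θ] [Nonempty Θ] in
theorem ERparam_nonneg (hσ : ∀ ai, 0 ≤ σ i ai) (θ : Θ) : 0 ≤ ERparam U σ i θ :=
  sum_nonneg fun ai _ => mul_nonneg (ERmat_nonneg ai θ) (hσ ai)

omit [Fintype Θ] [Nonempty Θ] in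
theorem ERmat_eq_zero_of_ERparam_nonpos (hσ : ∀ ai, 0 ≤ σ i ai) {θ : Θ}
    (hθ : ERparam U σ i θ ≤ 0) {ai : A i} (hai : 0 < σ i ai) : ERmat U σ i ai θ = 0 := by
  have hterms := (sum_eq_zero_iff_of_nonneg fun bi _ =>
    mul_nonneg (ERmat_nonneg bi θ) (hσ bi)).1 (le_antisymm hθ (ERparam_nonneg hσ θ))
  exact (mul_eq_zero.1 (hterms ai (mem_univ ai))).resolve_right hai.ne'

omit [Fintype Θ] [Nonempty Θ] in
theorem ERparam_eq_sup'_sub (hσ : IsDist (σ i)) (θ : Θ) :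
    ERparam U σ i θ = univ.sup' univ_nonempty (fun ci => EUmat U σ i ci θ) -
      ∑ ai, EUmat U σ i ai θ * σ i ai := by
  simp only [ERparam, ERmat, sub_mul, sum_sub_distrib, ← mul_sum, hσ.2, mul_one]

variable [DecidableEq Θ] {η : Θ}

omit [∀ j, Nonempty (A j)] [Nonempty Θ] in
theorem EUact_of_pure (hpure : π i = fun θ => if θ = η then (1 : ℝ) else 0) (ai : A i) :
    EUact U σ π i ai = EUmat U σ i ai η := by
  simp [EUact, hpure]

omit [∀ j, Nonempty (A j)] [Nonempty Θ] in
theorem EUtot_of_pure (hpure : π i = fun θ => if θ = η then (1 : ℝ) else 0) :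
    EUtot U σ π i = ∑ ai, EUmat U σ i ai η * σ i ai := by
  simp only [EUtot, EUact_of_pure hpure]

omit [Nonempty Θ] in
theorem ERtot_of_pure (hpure : π i = fun θ => if θ = η then (1 : ℝ) else 0) :
    ERtot U σ π i = ERparam U σ i η := by
  simp [ERtot, hpure]

omit [Nonempty Θ] in
theorem ERparam_eq_zero_of_pure (hσ : IsDist (σ i))
    (hbest : ∀ ai, EUtot U σ π i ≥ EUact U σ π i ai)
    (hpure : π i = fun θ => if θ = η then (1 : ℝ) else 0) : ERparam U σ i η = 0 := by
  have hsup : univ.sup' univ_nonempty (fun ci => EUmat U σ i ci η) ≤ EUtot U σ π i :=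
    sup'_le _ _ fun ci _ => EUact_of_pure hpure ci ▸ hbest ci
  have hnonneg := ERparam_nonneg (U := U) hσ.1 η
  rw [ERparam_eq_sup'_sub hσ, ← EUtot_of_pure hpure] at hnonneg ⊢
  linarith

end

theorem no_fictional_faith_regret_general [DecidableEq Θ]
    (U : ∀ i : Fin N, (∀ j : Fin N, A j) → Θ → ℝ)
    (σ : ∀ j : Fin N, A j → ℝ) (π : Fin N → Θ → ℝ)
    (hσ : ∀ i, IsDist (σ i))
    (heq : ExtendedEquilibrium U σ π) (i : Fin N) (η : Θ)
    (hpure : π i = fun θ => if θ = η then (1 : ℝ) else 0) :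
    ERtot U σ π i = 0 ∧
    ∀ ai : A i, 0 < σ i ai → ∀ θ : Θ,
      ERmat U σ i ai θ = 0 ∧
      EUmat U σ i ai θ =
        Finset.univ.sup' Finset.univ_nonempty (fun ci : A i => EUmat U σ i ci θ) := by
  have hERtot : ERtot U σ π i = 0 :=
    (ERtot_of_pure hpure).trans (ERparam_eq_zero_of_pure (hσ i) (heq.1 i) hpure)
  refine ⟨hERtot, fun ai hai θ => ?_⟩
  have hER : ERmat U σ i ai θ = 0 :=
    ERmat_eq_zero_of_ERparam_nonpos (hσ i).1 (hERtot ▸ heq.2 i θ) hai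
  exact ⟨hER, (sub_eq_zero.1 hER).symm⟩

/-- "No Fictional Faith", vanishing regret part: a pure equilibrium prior
forces zero expected regret, and every supported action is a best response under every
parameter value. -/
theorem no_fictional_faith_regret [DecidableEq Θ]
    (U : ∀ i : Fin N, (∀ j : Fin N, A j) → Θ → ℝ)
    (σ : ∀ j : Fin N, A j → ℝ) (π : Fin N → Θ → ℝ)
    (hσ : ∀ i, IsDist (σ i)) (hπ : ∀ i, IsDist (π i))
    (heq : ExtendedEquilibrium U σ π) (i : Fin N) (η : Θ)
    (hpure : π i = fun θ => if θ = η then (1 : ℝ) else 0) :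
    ERtot U σ π i = 0 ∧
    ∀ ai : A i, 0 < σ i ai → ∀ θ : Θ,
      ERmat U σ i ai θ = 0 ∧
      EUmat U σ i ai θ =
        Finset.univ.sup' Finset.univ_nonempty (fun ci : A i => EUmat U σ i ci θ) :=
  no_fictional_faith_regret_general U σ π hσ heq i η hpure
end
end

section
/- No Fictional Faith (expected utility invariance): let (σ*;π*) be a complete strategy profile of a finite game with uncertainty such that for every action a_i with σ*_i(a_i) > 0 and every θ ∈ Θ, EU_i(a_i;θ|σ*) = max_{c_i∈𝒜_i} EU_i(c_i;θ|σ*). Then for every probability distribution π'_i on Θ and every action a_i ∈ 𝒜_i, Σ_θ Σ_{b_i} EU_i(b_i;θ|σ*) σ*_i(b_i) π'_i(θ) ≥ Σ_θ EU_i(a_i;θ|σ*) π'_i(θ); that is, player i's strategy σ*_i remains expected-utility optimal under any subjective prior. -/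
open Finset

noncomputable section

variable {N : ℕ} {A : Fin N → Type*} [∀ j, Fintype (A j)] [∀ j, Nonempty (A j)]
  {Θ : Type*} [Fintype Θ] [Nonempty Θ]

lemma IsDist.sum_mul_eq_of_eq_on_support {α : Type*} [Fintype α] {p : α → ℝ} (hp : IsDist p)
    {f : α → ℝ} {c : ℝ} (hf : ∀ a, 0 < p a → f a = c) : ∑ a, f a * p a = c :=
  calc ∑ a, f a * p a = ∑ a, c * p a := by
        refine sum_congr rfl fun a _ => ?_
        rcases (hp.1 a).eq_or_lt with h | h
        · rw [← h, mul_zero, mul_zero]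
        · rw [hf a h]
    _ = c := by rw [← mul_sum, hp.2, mul_one]

lemma IsDist.le_sum_mul_of_eq_sup'_on_support {α : Type*} [Fintype α] [Nonempty α]
    {p : α → ℝ} (hp : IsDist p) {f : α → ℝ}
    (hf : ∀ a, 0 < p a → f a = univ.sup' univ_nonempty f) (b : α) :
    f b ≤ ∑ a, f a * p a := by
  rw [hp.sum_mul_eq_of_eq_on_support hf]
  exact le_sup' f (mem_univ b)

/-- "No Fictional Faith", expected-utility invariance part: if every
supported action of player `i` is a best response under every parameter value, then
`σᵢ` remains expected-utility optimal under any subjective prior. -/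
theorem no_fictional_faith_EU_invariance
    (U : ∀ i : Fin N, (∀ j : Fin N, A j) → Θ → ℝ)
    (σ : ∀ j : Fin N, A j → ℝ) (hσ : ∀ j, IsDist (σ j)) (i : Fin N)
    (hbest : ∀ ai : A i, 0 < σ i ai → ∀ θ : Θ,
      EUmat U σ i ai θ =
        Finset.univ.sup' Finset.univ_nonempty (fun ci : A i => EUmat U σ i ci θ))
    (π' : Θ → ℝ) (hπ' : IsDist π') (ai : A i) :
    (∑ θ, ∑ bi : A i, EUmat U σ i bi θ * σ i bi * π' θ) ≥
      ∑ θ, EUmat U σ i ai θ * π' θ := by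
  refine sum_le_sum fun θ _ => ?_
  rw [← sum_mul]
  have hmix : EUmat U σ i ai θ ≤ ∑ bi, EUmat U σ i bi θ * σ i bi :=
    (hσ i).le_sum_mul_of_eq_sup'_on_support (fun bi hbi => hbest bi hbi θ) ai
  exact mul_le_mul_of_nonneg_right hmix (hπ'.1 θ)
end
end

section
/- The 'Generals and the weather' game — the 2-player game with uncertainty with action sets 𝒜_1 = 𝒜_2 = {Up, Down}, parameter set Θ = {Calm, Storm}, and utilities given by the matrices U_1(·,·;Calm) = [[1,0],[0,1]], U_1(·,·;Storm) = [[1,0],[1,1]], U_2(·,·;Calm) = [[0,1],[1,0]], U_2(·,·;Storm) = [[0,1],[0,0]] (rows indexed by player 1's action, columns by player 2's action) — has the extended equilibrium σ*_1 = (1−1/√2, 1/√2), σ*_2 = (2−√2, √2−1), π*_1 = (1/√2, 1−1/√2), π*_2 = (√2−1, 2−√2), with equilibrium expected utilities EU*_1 = 2−√2, EU*_2 = 1−1/√2 and equilibrium expected regrets ER*_1 = 3/√2 − 2, ER*_2 = 3 − 2√2. -/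
/-!
The profile is fully mixed, so it is an extended equilibrium as soon as each player is
indifferent: both actions give the same expected utility, and both weather states give the
same expected regret. The totals `EUtot` and `ERtot` are then these common values. The
indifference is checked by hand in a two-player game, where a player's effective utility is
the expectation of the utility against the opponent's mixed strategy; writing `1 / √2 = √2 / 2`
turns every entry into an element of `ℚ(√2)` with `√2 * √2 = 2`.
-/

open Finset

noncomputable section

variable {N : ℕ} {A : Fin N → Type*} [∀ j, Fintype (A j)] [∀ j, Nonempty (A j)]
  {Θ : Type*} [Fintype Θ] [Nonempty Θ]

/-- The utilities of the "Generals and the weather" game. -/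
def GWU : ∀ _ : Fin 2, (∀ _ : Fin 2, Fin 2) → Fin 2 → ℝ := fun i a θ =>
  if i = 0 then
    (if θ = 0 then !![(1:ℝ), 0; 0, 1] else !![(1:ℝ), 0; 1, 1]) (a 0) (a 1)
  else
    (if θ = 0 then !![(0:ℝ), 1; 1, 0] else !![(0:ℝ), 1; 0, 0]) (a 0) (a 1)

/-- The equilibrium mixed strategies `σ*` of the "Generals and the weather" game. -/
def GWσ : ∀ _ : Fin 2, Fin 2 → ℝ :=
  ![![1 - 1 / Real.sqrt 2, 1 / Real.sqrt 2], ![2 - Real.sqrt 2, Real.sqrt 2 - 1]]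

/-- The equilibrium subjective priors `π*` of the "Generals and the weather" game. -/
def GWπ : Fin 2 → Fin 2 → ℝ :=
  ![![1 / Real.sqrt 2, 1 - 1 / Real.sqrt 2], ![Real.sqrt 2 - 1, 2 - Real.sqrt 2]]

section TwoPlayer

variable {α : Fin 2 → Type*} {Θ : Type*}

@[simp]
lemma piFinTwoEquiv_symm_apply_zero (p : α 0 × α 1) : (piFinTwoEquiv α).symm p 0 = p.1 := rfl

@[simp]
lemma piFinTwoEquiv_symm_apply_one (p : α 0 × α 1) : (piFinTwoEquiv α).symm p 1 = p.2 := rfl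

lemma update_piFinTwoEquiv_symm_zero (c : α 0) (d : α 1) (a : α 0) :
    Function.update ((piFinTwoEquiv α).symm (c, d)) 0 a = (piFinTwoEquiv α).symm (a, d) := by
  ext j; fin_cases j <;> rfl

lemma update_piFinTwoEquiv_symm_one (c : α 0) (d : α 1) (a : α 1) :
    Function.update ((piFinTwoEquiv α).symm (c, d)) 1 a = (piFinTwoEquiv α).symm (c, a) := by
  ext j; fin_cases j <;> rfl

variable [∀ j, Fintype (α j)]

lemma EUmat_zero_eq_sum (U : Fin 2 → (∀ j, α j) → Θ → ℝ) (σ : ∀ j : Fin 2, α j → ℝ)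
    (hσ : ∑ c, σ 0 c = 1) (a : α 0) (θ : Θ) :
    EUmat U σ 0 a θ = ∑ d, U 0 ((piFinTwoEquiv α).symm (a, d)) θ * σ 1 d := by
  rw [EUmat, ← (piFinTwoEquiv α).symm.sum_comp, Fintype.sum_prod_type]
  simp only [update_piFinTwoEquiv_symm_zero, piProb, Fin.prod_univ_two,
    piFinTwoEquiv_symm_apply_zero, piFinTwoEquiv_symm_apply_one]
  calc _ = ∑ c, σ 0 c * ∑ d, U 0 ((piFinTwoEquiv α).symm (a, d)) θ * σ 1 d := by
        simp only [Finset.mul_sum]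
        exact Finset.sum_congr rfl fun _ _ => Finset.sum_congr rfl fun _ _ => by ring
    _ = _ := by rw [← Finset.sum_mul, hσ, one_mul]

lemma EUmat_one_eq_sum (U : Fin 2 → (∀ j, α j) → Θ → ℝ) (σ : ∀ j : Fin 2, α j → ℝ)
    (hσ : ∑ d, σ 1 d = 1) (a : α 1) (θ : Θ) :
    EUmat U σ 1 a θ = ∑ c, U 1 ((piFinTwoEquiv α).symm (c, a)) θ * σ 0 c := by
  rw [EUmat, ← (piFinTwoEquiv α).symm.sum_comp, Fintype.sum_prod_type]
  simp only [update_piFinTwoEquiv_symm_one, piProb, Fin.prod_univ_two,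
    piFinTwoEquiv_symm_apply_zero, piFinTwoEquiv_symm_apply_one]
  calc _ = ∑ c, U 1 ((piFinTwoEquiv α).symm (c, a)) θ * σ 0 c * ∑ d, σ 1 d := by
        simp only [Finset.mul_sum]
        exact Finset.sum_congr rfl fun _ _ => Finset.sum_congr rfl fun _ _ => by ring
    _ = _ := by rw [hσ]; simp only [mul_one]

end TwoPlayer

lemma Finset.sup'_univ_fin_two {β : Type*} [LinearOrder β] (f : Fin 2 → β) :
    univ.sup' univ_nonempty f = max (f 0) (f 1) :=
  le_antisymm (sup'_le _ _ fun i _ => by fin_cases i <;> simp)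
    (max_le (le_sup' f (mem_univ 0)) (le_sup' f (mem_univ 1)))

section Indifference

variable {N : ℕ} {A : Fin N → Type*} [∀ j, Fintype (A j)] {Θ : Type*} [Fintype Θ]
  (U : Fin N → (∀ j, A j) → Θ → ℝ) (σ : ∀ j, A j → ℝ) (π : Fin N → Θ → ℝ)

lemma EUtot_eq_of_EUact_eq {i : Fin N} {c : ℝ} (hσ : ∑ a, σ i a = 1)
    (h : ∀ a, EUact U σ π i a = c) : EUtot U σ π i = c := by
  simp only [EUtot, h, ← Finset.mul_sum, hσ, mul_one]

variable [∀ j, Nonempty (A j)]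

lemma ERtot_eq_of_ERparam_eq {i : Fin N} {r : ℝ} (hπ : ∑ θ, π i θ = 1)
    (h : ∀ θ, ERparam U σ i θ = r) : ERtot U σ π i = r := by
  simp only [ERtot, h, ← Finset.mul_sum, hπ, mul_one]

lemma extendedEquilibrium_of_indifferent {c r : Fin N → ℝ} (hσ : ∀ i, ∑ a, σ i a = 1)
    (hπ : ∀ i, ∑ θ, π i θ = 1) (hEU : ∀ i a, EUact U σ π i a = c i)
    (hER : ∀ i θ, ERparam U σ i θ = r i) : ExtendedEquilibrium U σ π :=
  ⟨fun i a => by rw [EUtot_eq_of_EUact_eq U σ π (hσ i) (hEU i), hEU],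
    fun i θ => by rw [ERtot_eq_of_ERparam_eq U σ π (hπ i) (hER i), hER]⟩

end Indifference

lemma one_div_sqrt_two : 1 / √2 = √2 / 2 := by
  rw [div_eq_div_iff (by positivity) two_ne_zero, one_mul, Real.mul_self_sqrt zero_le_two]

lemma gwσ_eq : GWσ = ![![1 - √2 / 2, √2 / 2], ![2 - √2, √2 - 1]] := by
  rw [GWσ, one_div_sqrt_two]

lemma gwπ_eq : GWπ = ![![√2 / 2, 1 - √2 / 2], ![√2 - 1, 2 - √2]] := by
  rw [GWπ, one_div_sqrt_two]

lemma gwσ_isDist (i : Fin 2) : IsDist (GWσ i) := by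
  have := Real.one_lt_sqrt_two
  have := Real.sqrt_two_lt_three_halves
  rw [gwσ_eq]
  fin_cases i <;> refine ⟨Fin.forall_fin_two.mpr ⟨?_, ?_⟩, ?_⟩ <;>
    simp [Fin.sum_univ_two] <;> linarith

lemma gwπ_isDist (i : Fin 2) : IsDist (GWπ i) := by
  have := Real.one_lt_sqrt_two
  have := Real.sqrt_two_lt_three_halves
  rw [gwπ_eq]
  fin_cases i <;> refine ⟨Fin.forall_fin_two.mpr ⟨?_, ?_⟩, ?_⟩ <;>
    simp [Fin.sum_univ_two] <;> linarith

lemma gw_EUmat_zero : EUmat GWU GWσ 0 = ![![2 - √2, 2 - √2], ![√2 - 1, 1]] := by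
  ext a θ
  rw [EUmat_zero_eq_sum _ _ (gwσ_isDist 0).2, gwσ_eq]
  fin_cases a <;> fin_cases θ <;> norm_num [Fin.sum_univ_two, GWU]

lemma gw_EUmat_one : EUmat GWU GWσ 1 = ![![√2 / 2, 0], ![1 - √2 / 2, 1 - √2 / 2]] := by
  ext a θ
  rw [EUmat_one_eq_sum _ _ (gwσ_isDist 1).2, gwσ_eq]
  fin_cases a <;> fin_cases θ <;> norm_num [Fin.sum_univ_two, GWU]

lemma gw_ERmat_zero : ERmat GWU GWσ 0 = ![![0, √2 - 1], ![3 - 2 * √2, 0]] := by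
  have hcalm : max (2 - √2) (√2 - 1) = 2 - √2 :=
    max_eq_left (by linarith [Real.sqrt_two_lt_three_halves])
  have hstorm : max (2 - √2) 1 = 1 := max_eq_right (by linarith [Real.one_lt_sqrt_two])
  ext a θ
  simp only [ERmat, Finset.sup'_univ_fin_two, gw_EUmat_zero]
  fin_cases a <;> fin_cases θ <;> norm_num [hcalm, hstorm] <;> ring

lemma gw_ERmat_one : ERmat GWU GWσ 1 = ![![0, 1 - √2 / 2], ![√2 - 1, 0]] := by
  have hcalm : max (√2 / 2) (1 - √2 / 2) = √2 / 2 :=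
    max_eq_left (by linarith [Real.one_lt_sqrt_two])
  have hstorm : max 0 (1 - √2 / 2) = 1 - √2 / 2 :=
    max_eq_right (by linarith [Real.sqrt_two_lt_three_halves])
  ext a θ
  simp only [ERmat, Finset.sup'_univ_fin_two, gw_EUmat_one]
  fin_cases a <;> fin_cases θ <;> norm_num [hcalm, hstorm]
  ring

lemma gw_EUact (i a : Fin 2) : EUact GWU GWσ GWπ i a = ![2 - √2, 1 - 1 / √2] i := by
  have hs := Real.mul_self_sqrt (zero_le_two (α := ℝ))
  rw [one_div_sqrt_two]
  fin_cases i <;> fin_cases a <;>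
    simp [EUact, Fin.sum_univ_two, gw_EUmat_zero, gw_EUmat_one, gwπ_eq] <;> linarith

lemma gw_ERparam (i θ : Fin 2) : ERparam GWU GWσ i θ = ![3 / √2 - 2, 3 - 2 * √2] i := by
  have hs := Real.mul_self_sqrt (zero_le_two (α := ℝ))
  rw [div_eq_mul_one_div, one_div_sqrt_two]
  fin_cases i <;> fin_cases θ <;>
    simp [ERparam, Fin.sum_univ_two, gw_ERmat_zero, gw_ERmat_one] <;>
    simp [gwσ_eq] <;> linarith

/-- the "Generals and the weather" game has the stated extended equilibrium
with the stated equilibrium expected utilities and expected regrets. -/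
theorem gw_extended_equilibrium :
    (∀ i, IsDist (GWσ i)) ∧ (∀ i, IsDist (GWπ i)) ∧
    ExtendedEquilibrium GWU GWσ GWπ ∧
    EUtot GWU GWσ GWπ 0 = 2 - Real.sqrt 2 ∧
    EUtot GWU GWσ GWπ 1 = 1 - 1 / Real.sqrt 2 ∧
    ERtot GWU GWσ GWπ 0 = 3 / Real.sqrt 2 - 2 ∧
    ERtot GWU GWσ GWπ 1 = 3 - 2 * Real.sqrt 2 := by
  have hσ i : ∑ a, GWσ i a = 1 := (gwσ_isDist i).2
  have hπ i : ∑ θ, GWπ i θ = 1 := (gwπ_isDist i).2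
  exact ⟨gwσ_isDist, gwπ_isDist,
    extendedEquilibrium_of_indifferent _ _ _ hσ hπ gw_EUact gw_ERparam,
    EUtot_eq_of_EUact_eq _ _ _ (hσ 0) (gw_EUact 0),
    EUtot_eq_of_EUact_eq _ _ _ (hσ 1) (gw_EUact 1),
    ERtot_eq_of_ERparam_eq _ _ _ (hπ 0) (gw_ERparam 0),
    ERtot_eq_of_ERparam_eq _ _ _ (hπ 1) (gw_ERparam 1)⟩
end
end

section
/- The extended equilibrium of the 'Generals and the weather' game cannot be reproduced by any common prior in the corresponding Bayesian game: for every P_c ∈ [0,1], the Bayesian equilibrium strategies σ_1(P_c) = (P_c/(1+P_c), 1/(1+P_c)) and σ_2(P_c) = (1/(1+P_c), P_c/(1+P_c)) satisfy the symmetry σ_1(P_c)(Up) = σ_2(P_c)(Down), whereas the extended equilibrium strategies have σ*_1(Up) = 1−1/√2 ≠ √2−1 = σ*_2(Down); hence there is no P_c ∈ [0,1] with P_c/(1+P_c) = 1−1/√2 and P_c/(1+P_c) = √2−1. -/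
noncomputable section

/-- The Bayesian equilibrium strategy of the "Defender" given a common prior `Pc` for
calm weather: probabilities of `Up` and `Down`. -/
def bayesσ1 (Pc : ℝ) : Fin 2 → ℝ := ![Pc / (1 + Pc), 1 / (1 + Pc)]

/-- The Bayesian equilibrium strategy of the "Attacker" given a common prior `Pc` for
calm weather: probabilities of `Up` and `Down`. -/
def bayesσ2 (Pc : ℝ) : Fin 2 → ℝ := ![1 / (1 + Pc), Pc / (1 + Pc)]

theorem bayesσ1_up_eq_bayesσ2_down (Pc : ℝ) : bayesσ1 Pc 0 = bayesσ2 Pc 1 := rfl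

theorem one_sub_one_div_lt_sub_one {x : ℝ} (hx : 1 < x) : 1 - 1 / x < x - 1 :=
  calc 1 - 1 / x = (x - 1) / x := by field_simp
    _ < x - 1 := div_lt_self (by linarith) hx

theorem one_sub_one_div_sqrt_two_ne : 1 - 1 / Real.sqrt 2 ≠ Real.sqrt 2 - 1 :=
  (one_sub_one_div_lt_sub_one Real.one_lt_sqrt_two).ne

/-- no common prior reproduces the extended equilibrium of the "Generals
and the weather" game: the Bayesian equilibria satisfy `σ₁(Pc)(Up) = σ₂(Pc)(Down)`,
while the extended equilibrium has `σ*₁(Up) = 1 − 1/√2 ≠ √2 − 1 = σ*₂(Down)`; hence no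
`Pc ∈ [0,1]` matches both. -/
theorem gw_no_common_prior :
    (∀ Pc ∈ Set.Icc (0 : ℝ) 1, bayesσ1 Pc 0 = bayesσ2 Pc 1) ∧
    (1 - 1 / Real.sqrt 2 ≠ Real.sqrt 2 - 1) ∧
    ¬ ∃ Pc ∈ Set.Icc (0 : ℝ) 1,
        Pc / (1 + Pc) = 1 - 1 / Real.sqrt 2 ∧ Pc / (1 + Pc) = Real.sqrt 2 - 1 :=
  ⟨fun Pc _ => bayesσ1_up_eq_bayesσ2_down Pc, one_sub_one_div_sqrt_two_ne,
    fun ⟨_, _, hσ1, hσ2⟩ => one_sub_one_div_sqrt_two_ne (hσ1.symm.trans hσ2)⟩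
end
end

section
/- Perceived price of uncertainty in the 'Generals and the weather' game: although the underlying utilities are constant-sum (U_1(a;θ) + U_2(a;θ) = 1 for every action profile a and every weather state θ), the partially subjective expected utilities at the extended equilibrium do not sum to 1: EU*_1 + EU*_2 = (2−√2) + (1−1/√2) = 3 − (√2 + 1/√2) < 1. -/
/-!
For two players, `EUᵢ(σ;πᵢ)` is the bilinear form `σ₁ᵀ (Σ_θ πᵢ(θ) Uᵢ(θ)) σ₂` of the payoff matrix
averaged over player `i`'s own prior. Constant-sum utilities would make the two forms add up to
`1` only if both players averaged over the same prior; at the extended equilibrium they do not,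
and evaluating gives `2 − √2` and `1 − 1/√2`. The sum falls below `1` because
`√2 + 1/√2 > 2`, AM–GM being strict as `√2 ≠ 1`.
-/

open Finset

noncomputable section

variable {N : ℕ} {A : Fin N → Type*} [∀ j, Fintype (A j)] [∀ j, Nonempty (A j)]
  {Θ : Type*} [Fintype Θ] [Nonempty Θ]

section TwoPlayer

variable {α : Type*} [Fintype α]

theorem sum_fin_two_pi {M : Type*} [AddCommMonoid M] (f : (Fin 2 → α) → M) :
    ∑ b, f b = ∑ x, ∑ y, f ![x, y] := by
  rw [← (piFinTwoEquiv fun _ => α).symm.sum_comp, Fintype.sum_prod_type]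
  refine Fintype.sum_congr _ _ fun x => Fintype.sum_congr _ _ fun y => congrArg f ?_
  ext j; fin_cases j <;> rfl

omit [Fintype α] in
theorem update_vec_two_zero (x y a : α) : Function.update ![x, y] 0 a = ![a, y] := by
  ext j; fin_cases j <;> rfl

omit [Fintype α] in
theorem update_vec_two_one (x y a : α) : Function.update ![x, y] 1 a = ![x, a] := by
  ext j; fin_cases j <;> rfl

variable {Θ : Type*} (U : Fin 2 → (Fin 2 → α) → Θ → ℝ) (σ : Fin 2 → α → ℝ)

theorem EUmat_zero_eq (a : α) (θ : Θ) :
    EUmat U σ 0 a θ = (∑ x, σ 0 x) * ∑ y, U 0 ![a, y] θ * σ 1 y := by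
  rw [Fintype.sum_mul_sum, EUmat, sum_fin_two_pi]
  simp only [piProb, Fin.prod_univ_two, update_vec_two_zero]
  refine Fintype.sum_congr _ _ fun x => Fintype.sum_congr _ _ fun y => ?_
  simp only [Matrix.cons_val_zero, Matrix.cons_val_one]
  ring

theorem EUmat_one_eq (a : α) (θ : Θ) :
    EUmat U σ 1 a θ = (∑ y, σ 1 y) * ∑ x, U 1 ![x, a] θ * σ 0 x := by
  rw [Fintype.sum_mul_sum, Finset.sum_comm, EUmat, sum_fin_two_pi]
  simp only [piProb, Fin.prod_univ_two, update_vec_two_one]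
  refine Fintype.sum_congr _ _ fun x => Fintype.sum_congr _ _ fun y => ?_
  simp only [Matrix.cons_val_zero, Matrix.cons_val_one]
  ring

end TwoPlayer

theorem two_lt_add_one_div {x : ℝ} (hx : 0 < x) (hx1 : x ≠ 1) : 2 < x + 1 / x := by
  have hgap : x + 1 / x - 2 = (x - 1) ^ 2 / x := by field_simp; ring
  have hpos : 0 < (x - 1) ^ 2 / x := div_pos (sq_pos_of_ne_zero (sub_ne_zero.mpr hx1)) hx
  linarith

theorem GWU_add (a : Fin 2 → Fin 2) (θ : Fin 2) : GWU 0 a θ + GWU 1 a θ = 1 := by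
  simp only [GWU, if_neg one_ne_zero]
  generalize a 0 = x; generalize a 1 = y
  fin_cases θ <;> fin_cases x <;> fin_cases y <;> simp

theorem GWσ_sum (i : Fin 2) : ∑ x, GWσ i x = 1 := by
  fin_cases i <;> norm_num [GWσ, Fin.sum_univ_two]

theorem EUtot_GW_zero : EUtot GWU GWσ GWπ 0 = 2 - Real.sqrt 2 := by
  simp only [EUtot, EUact, EUmat_zero_eq, GWσ_sum, one_mul]
  simp [Fin.sum_univ_two, GWU, GWσ, GWπ]
  field_simp
  linear_combination Real.sq_sqrt (zero_le_two : (0:ℝ) ≤ 2)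

theorem EUtot_GW_one : EUtot GWU GWσ GWπ 1 = 1 - 1 / Real.sqrt 2 := by
  simp only [EUtot, EUact, EUmat_one_eq, GWσ_sum, one_mul]
  simp [Fin.sum_univ_two, GWU, GWσ, GWπ]
  field_simp
  ring

/-- perceived price of uncertainty in the "Generals and the weather" game:
the utilities are constant-sum, yet the equilibrium expected utilities sum to
`3 − (√2 + 1/√2) < 1`. -/
theorem gw_price_of_uncertainty :
    (∀ (a : ∀ _ : Fin 2, Fin 2) (θ : Fin 2), GWU 0 a θ + GWU 1 a θ = 1) ∧
    EUtot GWU GWσ GWπ 0 + EUtot GWU GWσ GWπ 1 = 3 - (Real.sqrt 2 + 1 / Real.sqrt 2) ∧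
    3 - (Real.sqrt 2 + 1 / Real.sqrt 2) < 1 := by
  refine ⟨GWU_add, by rw [EUtot_GW_zero, EUtot_GW_one]; ring, ?_⟩
  have hamgm := two_lt_add_one_div (Real.sqrt_pos.mpr two_pos)
    (by rw [Ne, Real.sqrt_eq_one]; norm_num)
  linarith
end
end
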